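/- Single contraction of the integrability condition (equation (9), flat space). Let n ≥ 4, and let W_{abcd} (twice continuously differentiable) and L_{abc} (three times continuously differentiable, with L_{abc} = L_{[ab]c} and L_{ab}^{b} = 0) be tensor fields on flat ℝⁿ satisfying equation (5), with W additionally satisfying W_{abcd} = W_{[ab]cd} = W_{ab[cd]}, W_{abcd} = W_{cdab} and W^a_{bad} = 0. Then W^{[ab}_{[cd;i]}^{i]} = −(4(n−4)/(9(n−2))) ( L^{[a|i|}_{[c;|i|d]}^{b]} + L_{[c}^{i[a}_{;|i|d]}^{b]} ) − (4/(9(n−3))) δ^{[a}_{[c} W^{b]i}_{d]j;i}^{j}. -/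

import Mathlib

open scoped ContDiff

noncomputable section

/-- Partial derivative `∂ᵢ f` of a scalar field on flat `ℝⁿ` (points represented as
`Fin n → ℝ`, standard coordinates) in the `i`-th coordinate direction.  In Cartesian
coordinates on flat space this is the covariant derivative `;i`. -/
def pd {n : ℕ} (i : Fin n) (f : (Fin n → ℝ) → ℝ) : (Fin n → ℝ) → ℝ :=
  fun x => fderiv ℝ f x (Pi.single i 1)

/-- Components `η_{ab}` of the constant diagonal metric with diagonal entries `η a = ±1`;
since the entries are `±1` these coincide with the components `η^{ab}` of the inverse
metric. -/
def gm {n : ℕ} (η : Fin n → ℝ) (a b : Fin n) : ℝ := if a = b then η a else 0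

/-- Antisymmetrization over two index slots. -/
def asym2 {n : ℕ} (T : Fin n → Fin n → ℝ) (a b : Fin n) : ℝ := (T a b - T b a) / 2

/-- Antisymmetrization over three index slots. -/
def asym3 {n : ℕ} (T : Fin n → Fin n → Fin n → ℝ) (a b c : Fin n) : ℝ :=
  (T a b c - T a c b - T b a c + T b c a + T c a b - T c b a) / 6

/-- Simultaneous antisymmetrization over a pair of upper slots and a pair of lower slots. -/
def asym22 {n : ℕ} (T : Fin n → Fin n → Fin n → Fin n → ℝ) (a b c d : Fin n) : ℝ :=
  (T a b c d - T b a c d - T a b d c + T b a d c) / 4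

/-- Simultaneous antisymmetrization over a triple of upper slots and a triple of lower
slots (arguments ordered as `T upper₁ upper₂ upper₃ lower₁ lower₂ lower₃`). -/
def asym33 {n : ℕ} (T : Fin n → Fin n → Fin n → Fin n → Fin n → Fin n → ℝ)
    (a b f c d e : Fin n) : ℝ :=
  asym3 (fun a b f => asym3 (fun c d e => T a b f c d e) c d e) a b f

/-- A Weyl candidate: a 4-tensor field with the index symmetries (3a)–(3d):
antisymmetry in the first and in the second index pair, symmetry under interchange of the
two pairs, vanishing cyclic sum `W_{a[bcd]} = 0`, and vanishing trace `W^a{}_{bad} = 0`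
(the trace being taken with the metric `η`). -/
def WeylCandidate {n : ℕ} (η : Fin n → ℝ)
    (W : (Fin n → ℝ) → Fin n → Fin n → Fin n → Fin n → ℝ) : Prop :=
  (∀ x a b c d, W x a b c d = - W x b a c d) ∧
  (∀ x a b c d, W x a b c d = - W x a b d c) ∧
  (∀ x a b c d, W x a b c d = W x c d a b) ∧
  (∀ x a b c d, asym3 (fun b c d => W x a b c d) b c d = 0) ∧
  (∀ x b d, ∑ a, η a * W x a b a d = 0)

/-- The right-hand side of the Lanczos potential equation (4), in the equivalent fully
lowered form (the free indices `a b`, raised in the paper, are lowered with the invertible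
diagonal metric `η`, which only multiplies each component equation by `η a * η b ≠ 0`).
Each contracted (dummy) index pair carries a factor `η i` coming from the inverse
metric. -/
def rhs4 {n : ℕ} (η : Fin n → ℝ) (L : (Fin n → ℝ) → Fin n → Fin n → Fin n → ℝ)
    (x : Fin n → ℝ) (a b c d : Fin n) : ℝ :=
  -- 2 L^{ab}{}_{[c;d]}
  (pd d (L · a b c) x - pd c (L · a b d) x)
  -- + 2 L_{cd}{}^{[a;b]}
  + (pd b (L · c d a) x - pd a (L · c d b) x)
  -- − (4/(n−2)) δ^{[a}_{[c} ( L^{b]i}{}_{d];i} − L^{b]i}{}_{|i|;d]} + L_{d]i}{}^{b];i} − L_{d]i}{}^{|i|;b]} )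
  - (4 / ((n : ℝ) - 2)) *
      asym22 (fun a b c d =>
        gm η a c *
          ∑ i, η i *
            (pd i (L · b i d) x - pd d (L · b i i) x
              + pd i (L · d i b) x - pd b (L · d i i) x)) a b c d
  -- + (8/((n−2)(n−1))) δ^{a}_{[c} δ^{b}_{d]} L^{ij}{}_{i;j}
  + (8 / (((n : ℝ) - 2) * ((n : ℝ) - 1))) *
      ((gm η a c * gm η b d - gm η a d * gm η b c) / 2) *
      ∑ i, ∑ j, η i * η j * pd j (L · i j i) x

/-- Equation (4): `L` is a Lanczos potential for `W` (fully lowered, equivalent form). -/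
def Eq4 {n : ℕ} (η : Fin n → ℝ)
    (W : (Fin n → ℝ) → Fin n → Fin n → Fin n → Fin n → ℝ)
    (L : (Fin n → ℝ) → Fin n → Fin n → Fin n → ℝ) : Prop :=
  ∀ x a b c d, W x a b c d = rhs4 η L x a b c d

/-- The right-hand side of equation (5) (equation (4) in the Lanczos algebraic gauge
`L_{ab}{}^b = 0`), fully lowered form:
`2 L^{ab}{}_{[c;d]} + 2 L_{cd}{}^{[a;b]} − (4/(n−2)) δ^{[a}_{[c} ( L^{b]i}{}_{d];i} + L_{d]i}{}^{b];i} )`. -/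
def rhs5 {n : ℕ} (η : Fin n → ℝ) (L : (Fin n → ℝ) → Fin n → Fin n → Fin n → ℝ)
    (x : Fin n → ℝ) (a b c d : Fin n) : ℝ :=
  (pd d (L · a b c) x - pd c (L · a b d) x)
  + (pd b (L · c d a) x - pd a (L · c d b) x)
  - (4 / ((n : ℝ) - 2)) *
      asym22 (fun a b c d =>
        gm η a c * ∑ i, η i * (pd i (L · b i d) x + pd i (L · d i b) x)) a b c d

/-- Equation (5). -/
def Eq5 {n : ℕ} (η : Fin n → ℝ)
    (W : (Fin n → ℝ) → Fin n → Fin n → Fin n → Fin n → ℝ)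
    (L : (Fin n → ℝ) → Fin n → Fin n → Fin n → ℝ) : Prop :=
  ∀ x a b c d, W x a b c d = rhs5 η L x a b c d

/-- Constraint (8), fully lowered form:
`W^{[ab}{}_{[cd;e]}{}^{f]} = (1/(n−4)) δ^{[a}_{[c} W^{bf]}{}_{de];i}{}^{i}
 + (2/(n−4)) δ^{[a}_{[c} W^{|i|b}{}_{de];i}{}^{f]} + (2/(n−4)) δ^{[a}_{[c} W^{bf]}{}_{|i|d;e]}{}^{i}
 + (4/((n−3)(n−4))) δ^{[a}_{[c} δ^{b}_{d} W^{f]i}{}_{e]j;i}{}^{j}`. -/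
def Constraint8 {n : ℕ} (η : Fin n → ℝ)
    (W : (Fin n → ℝ) → Fin n → Fin n → Fin n → Fin n → ℝ) : Prop :=
  ∀ x a b f c d e,
    asym33 (fun a b f c d e => pd f (pd e (W · a b c d)) x) a b f c d e =
      (1 / ((n : ℝ) - 4)) *
          asym33 (fun a b f c d e =>
            gm η a c * ∑ i, η i * pd i (pd i (W · b f d e)) x) a b f c d e
      + (2 / ((n : ℝ) - 4)) *
          asym33 (fun a b f c d e =>
            gm η a c * ∑ i, η i * pd f (pd i (W · i b d e)) x) a b f c d e
      + (2 / ((n : ℝ) - 4)) *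
          asym33 (fun a b f c d e =>
            gm η a c * ∑ i, η i * pd i (pd e (W · b f i d)) x) a b f c d e
      + (4 / (((n : ℝ) - 3) * ((n : ℝ) - 4))) *
          asym33 (fun a b f c d e =>
            gm η a c * gm η b d *
              ∑ i, ∑ j, η i * η j * pd j (pd i (W · f i e j)) x) a b f c d e

/-- Constraint (10), fully lowered form:
`W^{[ab}{}_{cd;i}{}^{|i|e]} + 2 W^{[ab}{}_{i[c;d]}{}^{|i|e]}
 + (4/(n−3)) δ^{[a}_{[c} W^{b|i}{}_{d]j;i}{}^{j|e]} = 0`,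
antisymmetrized over the upper indices `a b e` and (where indicated) the lower indices
`c d`. -/
def Constraint10 {n : ℕ} (η : Fin n → ℝ)
    (W : (Fin n → ℝ) → Fin n → Fin n → Fin n → Fin n → ℝ) : Prop :=
  ∀ x a b e c d,
    asym3 (fun a b e =>
      (∑ i, η i * pd e (pd i (pd i (W · a b c d))) x)
      + 2 * asym2 (fun c d =>
            ∑ i, η i * pd e (pd i (pd d (W · a b i c))) x) c d
      + (4 / ((n : ℝ) - 3)) * asym2 (fun c d =>
            gm η a c *
              ∑ i, ∑ j, η i * η j * pd e (pd j (pd i (W · b i d j))) x) c d) a b e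
    = 0

/-!
Write `M_{bd} = L_{bid}{}^{;i} + L_{dib}{}^{;i}`, so that (5) reads
`W_{abcd} = 2 L_{ab[c;d]} + 2 L_{cd[a;b]} - (4/(n-2)) δ_{[a[c} M_{b]d]}`.
In `W_{[ab|[cd;e]|f]}` the curl terms die, since partial derivatives commute and each of them
is symmetric in two of the antisymmetrised slots; only `δ_{[a[c} M_{b|d;e]|f]}` survives.
Contracting `e` with `f` leaves `M_{ac;bd}` and `δ_{ac} (□M_{bd} - M_{bj;d}{}^{j} - M_{dj;b}{}^{j})`,
and by (5) the double divergence `W_{bidj}{}^{;ij}` is `(n-3)/(n-2)` times the same bracket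
(`M_{ij}{}^{;ij}` vanishes because `L` is antisymmetric in its first pair, and `M` is tracefree
by the gauge condition). All of this is linear algebra on the third jet `L_{pqr;stu}` at a point.
-/

section LanczosJets

variable {n : ℕ}

section PartialDerivatives

variable {f g : (Fin n → ℝ) → ℝ} (i : Fin n)

theorem ContDiff.contDiff_pd {k m : WithTop ℕ∞} (hf : ContDiff ℝ m f) (hkm : k + 1 ≤ m) :
    ContDiff ℝ k (pd i f) :=
  (hf.fderiv_right hkm).clm_apply contDiff_const

theorem pd_comm (hf : ContDiff ℝ 2 f) (j : Fin n) : pd i (pd j f) = pd j (pd i f) := by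
  have hdf : Differentiable ℝ (fderiv ℝ f) :=
    (hf.fderiv_right (m := 1) le_rfl).differentiable one_ne_zero
  have hpd : ∀ v w y, fderiv ℝ (fun z => fderiv ℝ f z v) y w = fderiv ℝ (fderiv ℝ f) y w v :=
    fun v w y => by simp [fderiv_clm_apply (hdf y) (differentiableAt_const v)]
  ext y
  change fderiv ℝ (fun z => fderiv ℝ f z _) y _ = fderiv ℝ (fun z => fderiv ℝ f z _) y _
  rw [hpd, hpd, (hf.contDiffAt.isSymmSndFDerivAt (by simp)).eq]

theorem ContDiff.differentiable_pd {m : WithTop ℕ∞} (hf : ContDiff ℝ m f) (hm : 2 ≤ m) :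
    Differentiable ℝ (pd i f) :=
  (hf.contDiff_pd i (k := 1) (by simpa [one_add_one_eq_two] using hm)).differentiable one_ne_zero

theorem ContDiff.differentiable_pd_pd (hf : ContDiff ℝ 3 f) (j : Fin n) :
    Differentiable ℝ (pd j (pd i f)) :=
  (hf.contDiff_pd i (k := 2) (by norm_num)).differentiable_pd j le_rfl

theorem pd_const (c : ℝ) : pd i (fun _ => c) = fun _ => 0 := by
  ext y; simp [pd]

theorem pd_fun_neg : pd i (fun y => -f y) = fun y => -pd i f y := by
  ext y; simp [pd, fderiv_fun_neg]

theorem pd_fun_add (hf : Differentiable ℝ f) (hg : Differentiable ℝ g) :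
    pd i (fun y => f y + g y) = fun y => pd i f y + pd i g y := by
  ext y; simp [pd, fderiv_fun_add (hf y) (hg y)]

theorem pd_fun_sub (hf : Differentiable ℝ f) (hg : Differentiable ℝ g) :
    pd i (fun y => f y - g y) = fun y => pd i f y - pd i g y := by
  ext y; simp [pd, fderiv_fun_sub (hf y) (hg y)]

theorem pd_const_mul (c : ℝ) (hf : Differentiable ℝ f) :
    pd i (fun y => c * f y) = fun y => c * pd i f y := by
  ext y; simp [pd, fderiv_const_mul (hf y)]

theorem pd_div_const (c : ℝ) (hf : Differentiable ℝ f) :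
    pd i (fun y => f y / c) = fun y => pd i f y / c := by
  simpa only [div_eq_inv_mul] using pd_const_mul i c⁻¹ hf

theorem pd_fun_sum {ι : Type*} (s : Finset ι) {F : ι → (Fin n → ℝ) → ℝ}
    (hF : ∀ k, Differentiable ℝ (F k)) :
    pd i (fun y => ∑ k ∈ s, F k y) = fun y => ∑ k ∈ s, pd i (F k) y := by
  ext y; simp [pd, fderiv_fun_sum fun k _ => hF k y]

end PartialDerivatives

/-- `lanczosJet L x p q r s t u` is `L_{pqr;stu}` at `x`. -/
def lanczosJet (L : (Fin n → ℝ) → Fin n → Fin n → Fin n → ℝ) (x : Fin n → ℝ)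
    (p q r s t u : Fin n) : ℝ :=
  pd u (pd t (pd s (L · p q r))) x

structure IsLanczosJet (η : Fin n → ℝ)
    (S : Fin n → Fin n → Fin n → Fin n → Fin n → Fin n → ℝ) : Prop where
  antisymm : ∀ p q r s t u, S p q r s t u = -S q p r s t u
  comm_45 : ∀ p q r s t u, S p q r t s u = S p q r s t u
  comm_56 : ∀ p q r s t u, S p q r s u t = S p q r s t u
  trace_eq_zero : ∀ p s t u, ∑ j, η j * S p j j s t u = 0

/-- `symmDivHess η S b d e f` is `(L_{bid}{}^{;i} + L_{dib}{}^{;i})_{;ef}` when `S` is the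
third jet of `L`. -/
def symmDivHess (η : Fin n → ℝ) (S : Fin n → Fin n → Fin n → Fin n → Fin n → Fin n → ℝ)
    (b d e f : Fin n) : ℝ :=
  ∑ i, η i * (S b i d i e f + S d i b i e f)

/-- `weylJet η S p q r s t u` is `W_{pqrs;tu}` for `W` given by equation (5) in terms of an `L`
with third jet `S`. -/
def weylJet (η : Fin n → ℝ) (S : Fin n → Fin n → Fin n → Fin n → Fin n → Fin n → ℝ)
    (p q r s t u : Fin n) : ℝ :=
  (S p q r s t u - S p q s r t u) + (S r s p q t u - S r s q p t u)
    - 4 / ((n : ℝ) - 2) * asym22 (fun p q r s => gm η p r * symmDivHess η S q s t u) p q r s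

section LanczosPotential

variable {η : Fin n → ℝ} {L : (Fin n → ℝ) → Fin n → Fin n → Fin n → ℝ}
  (hL : ∀ p q r, ContDiff ℝ 3 (L · p q r))
include hL

theorem pd_pd_rhs5 (x : Fin n → ℝ) (p q r s t u : Fin n) :
    pd u (pd t (rhs5 η L · p q r s)) x = weylJet η (lanczosJet L x) p q r s t u := by
  have hL₁ : ∀ i p q r, Differentiable ℝ (pd i (L · p q r)) := fun i p q r =>
    (hL p q r).differentiable_pd i (by norm_num)
  have hL₂ : ∀ i j p q r, Differentiable ℝ (pd j (pd i (L · p q r))) := fun i j p q r =>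
    (hL p q r).differentiable_pd_pd i j
  unfold rhs5 asym22
  simp (disch := fun_prop) only [pd_fun_add, pd_fun_sub, pd_const_mul, pd_fun_sum, pd_div_const]
  rfl

theorem isLanczosJet_lanczosJet (hLasym : ∀ x p q r, L x p q r = -L x q p r)
    (hgauge : ∀ x p, ∑ j, η j * L x p j j = 0) (x : Fin n → ℝ) :
    IsLanczosJet η (lanczosJet L x) where
  antisymm p q r s t u := by
    simp only [lanczosJet, show (L · p q r) = fun y => -L y q p r from funext (hLasym · p q r),
      pd_fun_neg]
  comm_45 p q r s t u := by
    simp only [lanczosJet, pd_comm s ((hL p q r).of_le (by norm_num)) t]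
  comm_56 p q r s t u := by
    simp only [lanczosJet, pd_comm t ((hL p q r).contDiff_pd s (by norm_num)) u]
  trace_eq_zero p s t u := by
    have hL₀ : ∀ p q r, Differentiable ℝ (L · p q r) := fun p q r =>
      (hL p q r).differentiable (by norm_num)
    have hL₁ : ∀ i p q r, Differentiable ℝ (pd i (L · p q r)) := fun i p q r =>
      (hL p q r).differentiable_pd i (by norm_num)
    have hL₂ : ∀ i j p q r, Differentiable ℝ (pd j (pd i (L · p q r))) := fun i j p q r =>
      (hL p q r).differentiable_pd_pd i j
    calc ∑ j, η j * lanczosJet L x p j j s t u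
        = pd u (pd t (pd s fun y => ∑ j, η j * L y p j j)) x := by
          simp (disch := fun_prop) only [pd_fun_sum, pd_const_mul, lanczosJet]
      _ = 0 := by simp [hgauge, pd_const]

end LanczosPotential

section Contractions

theorem sum_mul_const_mul (η : Fin n → ℝ) (k : ℝ) (f : Fin n → ℝ) :
    ∑ i, η i * (k * f i) = k * ∑ i, η i * f i := by
  rw [Finset.mul_sum]
  exact Finset.sum_congr rfl fun i _ => mul_left_comm _ _ _

theorem sum_sum_mul_eq_sum_mul_sum (η : Fin n → ℝ) (F : Fin n → Fin n → ℝ) :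
    ∑ i, ∑ j, η i * η j * F i j = ∑ i, η i * ∑ j, η j * F i j := by
  simp only [Finset.mul_sum, mul_assoc]

theorem sum_mul_sum_comm (η : Fin n → ℝ) (F : Fin n → Fin n → ℝ) :
    ∑ i, η i * ∑ j, η j * F i j = ∑ j, η j * ∑ i, η i * F i j := by
  simp only [Finset.mul_sum]
  rw [Finset.sum_comm]
  exact Fintype.sum_congr _ _ fun j => Fintype.sum_congr _ _ fun i => mul_left_comm _ _ _

variable {η : Fin n → ℝ}

theorem sum_mul_sum_eq_zero_of_antisymm {A : Fin n → Fin n → ℝ} (hA : ∀ i j, A i j = -A j i) :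
    ∑ i, η i * ∑ j, η j * A i j = 0 := by
  have h : ∑ i, η i * ∑ j, η j * A i j = -∑ i, η i * ∑ j, η j * A i j := by
    conv_rhs => rw [sum_mul_sum_comm, ← Finset.sum_neg_distrib]
    refine Fintype.sum_congr _ _ fun i => ?_
    rw [← mul_neg, ← Finset.sum_neg_distrib]
    exact congrArg _ (Fintype.sum_congr _ _ fun j => by rw [hA]; ring)
  linarith

variable (hη : ∀ i, η i = 1 ∨ η i = -1)
include hη

theorem sum_mul_gm_mul_left (p : Fin n) (f : Fin n → ℝ) :
    ∑ i, η i * (gm η i p * f i) = f p := by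
  rw [Fintype.sum_eq_single p fun i hi => by simp [gm, hi]]
  rcases hη p with h | h <;> simp [gm, h]

theorem sum_mul_gm_mul_right (p : Fin n) (f : Fin n → ℝ) :
    ∑ i, η i * (gm η p i * f i) = f p := by
  rw [Fintype.sum_eq_single p fun i hi => by simp [gm, Ne.symm hi]]
  rcases hη p with h | h <;> simp [gm, h]

theorem sum_mul_gm_self_mul (c : ℝ) : ∑ i : Fin n, η i * (gm η i i * c) = n * c := by
  have h : ∀ i, η i * (gm η i i * c) = c := fun i => by rcases hη i with h | h <;> simp [gm, h]
  simp [h]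

theorem sum_asym33_gm_mul {N : Fin n → Fin n → Fin n → Fin n → ℝ}
    (hN₁₂ : ∀ b d e f, N b d e f = N d b e f) (hN₃₄ : ∀ b d e f, N b d e f = N b d f e)
    (htr : ∀ e f, ∑ i, η i * N i i e f = 0) (a b c d : Fin n) :
    ∑ i, η i * asym33 (fun a b f c d e => gm η a c * N b d e f) a b i c d i =
      ((n : ℝ) - 4) / 9 * asym22 (fun a b c d => N a c b d) a b c d
      + 1 / 9 * asym22 (fun a b c d =>
          gm η a c * ∑ j, η j * (N b d j j - N b j d j - N d j b j)) a b c d := by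
  simp only [asym33, asym3, asym22, add_div, sub_div, mul_add, mul_sub, Finset.sum_add_distrib,
    Finset.sum_sub_distrib, mul_div_assoc', ← Finset.sum_div]
  simp only [sum_mul_gm_mul_left hη, sum_mul_gm_mul_right hη, sum_mul_gm_self_mul hη,
    sum_mul_const_mul]
  simp only [hN₁₂ _ _ _ _, hN₃₄ _ _ _ _, htr]
  ring

end Contractions

theorem symmDivHess_comm_12 (η : Fin n → ℝ) (S : Fin n → Fin n → Fin n → Fin n → Fin n → Fin n → ℝ)
    (b d e f : Fin n) : symmDivHess η S b d e f = symmDivHess η S d b e f := by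
  simp only [symmDivHess, add_comm]

namespace IsLanczosJet

variable {η : Fin n → ℝ} {S : Fin n → Fin n → Fin n → Fin n → Fin n → Fin n → ℝ}
  (hS : IsLanczosJet η S)
include hS

theorem symmDivHess_comm_34 (b d e f : Fin n) :
    symmDivHess η S b d e f = symmDivHess η S b d f e := by
  simp only [symmDivHess, hS.comm_56]

theorem sum_symmDivHess_self (e f : Fin n) : ∑ b, η b * symmDivHess η S b b e f = 0 := by
  have h : ∀ i, ∑ b, η b * S b i b i e f = 0 := fun i => by
    rw [← neg_eq_zero, ← Finset.sum_neg_distrib, ← hS.trace_eq_zero i i e f]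
    exact Fintype.sum_congr _ _ fun b => by rw [hS.antisymm]; ring
  calc ∑ b, η b * symmDivHess η S b b e f = ∑ i, η i * (2 * ∑ b, η b * S b i b i e f) := by
        simp only [symmDivHess, Finset.mul_sum]
        rw [Finset.sum_comm]
        exact Fintype.sum_congr _ _ fun i => Fintype.sum_congr _ _ fun b => by ring
    _ = 0 := by simp [h]

theorem sum_sum_symmDivHess : ∑ i, η i * ∑ j, η j * symmDivHess η S i j i j = 0 := by
  have h₁ : ∀ j, ∑ i, η i * ∑ k, η k * S i k j k i j = 0 := fun j =>
    sum_mul_sum_eq_zero_of_antisymm fun i k => by rw [hS.antisymm, hS.comm_45]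
  have h₂ : ∀ i, ∑ j, η j * ∑ k, η k * S j k i k i j = 0 := fun i =>
    sum_mul_sum_eq_zero_of_antisymm fun j k => by
      rw [hS.antisymm]; simp only [hS.comm_45 _ _ _ _ _ _, hS.comm_56 _ _ _ _ _ _]
  calc ∑ i, η i * ∑ j, η j * symmDivHess η S i j i j
      = ∑ j, η j * ∑ i, η i * ∑ k, η k * S i k j k i j
          + ∑ i, η i * ∑ j, η j * ∑ k, η k * S j k i k i j := by
        simp only [symmDivHess, mul_add, Finset.sum_add_distrib, Finset.mul_sum]
        congr 1
        rw [Finset.sum_comm]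
        exact Fintype.sum_congr _ _ fun j => Fintype.sum_congr _ _ fun i =>
          Fintype.sum_congr _ _ fun k => by ring
    _ = 0 := by simp [h₁, h₂]

/-- The integrability condition: the curl terms of `W` drop out under antisymmetrization,
being symmetric in a pair of the antisymmetrized slots. -/
theorem asym33_weylJet (a b f c d e : Fin n) :
    asym33 (fun a b f c d e => weylJet η S a b c d e f) a b f c d e =
      -(4 / ((n : ℝ) - 2)) *
        asym33 (fun a b f c d e => gm η a c * symmDivHess η S b d e f) a b f c d e := by
  simp only [asym33, asym3, weylJet, asym22, hS.comm_45 _ _ _ _ _ _, hS.comm_56 _ _ _ _ _ _]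
  ring

theorem sum_sum_weylJet (hη : ∀ i, η i = 1 ∨ η i = -1) (b d : Fin n) :
    ∑ i, η i * ∑ j, η j * weylJet η S b i d j i j =
      (1 - 1 / ((n : ℝ) - 2)) *
        ∑ j, η j * (symmDivHess η S b d j j - symmDivHess η S b j d j
          - symmDivHess η S d j b j) := by
  have e₁ : ∑ i, η i * ∑ j, η j * S b i d j i j + ∑ i, η i * ∑ j, η j * S d j b i i j
      = ∑ j, η j * symmDivHess η S b d j j := by
    simp only [symmDivHess, mul_add, Finset.sum_add_distrib]
    rw [sum_mul_sum_comm η fun j i => S b i d i j j]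
    simp only [hS.comm_45 _ _ _ _ _ _, hS.comm_56 _ _ _ _ _ _]
  have hvanish : ∀ p q, ∑ j, η j * ∑ i, η i * S j i p i q j = 0 := fun p q =>
    sum_mul_sum_eq_zero_of_antisymm fun j i => by
      rw [hS.antisymm]; simp only [hS.comm_45 _ _ _ _ _ _, hS.comm_56 _ _ _ _ _ _]
  have e₂ : ∑ i, η i * ∑ j, η j * S b i j d i j = ∑ j, η j * symmDivHess η S b j d j := by
    simp only [symmDivHess, mul_add, Finset.sum_add_distrib, hvanish, add_zero]
    rw [sum_mul_sum_comm η fun j i => S b i j i d j]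
    simp only [hS.comm_45 _ _ _ _ _ _]
  have e₃ : ∑ i, η i * ∑ j, η j * S d j i b i j = ∑ j, η j * symmDivHess η S d j b j := by
    simp only [symmDivHess, mul_add, Finset.sum_add_distrib, hvanish, add_zero]
    simp only [hS.comm_45 _ _ _ _ _ _, hS.comm_56 _ _ _ _ _ _]
  have hdiv : ∀ y : ℝ, 4 / ((n : ℝ) - 2) * (y / 4) = 1 / ((n : ℝ) - 2) * y := fun y => by ring
  simp only [weylJet, asym22, hdiv, sum_mul_const_mul, mul_sub, mul_add, Finset.sum_add_distrib,
    Finset.sum_sub_distrib]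
  simp only [sum_mul_gm_mul_left hη, sum_mul_gm_mul_right hη, hS.sum_sum_symmDivHess,
    symmDivHess_comm_12 η S _ d _ b, hS.symmDivHess_comm_34 d _ _ b]
  linear_combination e₁ - e₂ - e₃

end IsLanczosJet

end LanczosJets

theorem singly_contracted_integrability_condition_general
    (n : ℕ) (hn : 4 ≤ n) (η : Fin n → ℝ) (hη : ∀ i, η i = 1 ∨ η i = -1)
    (W : (Fin n → ℝ) → Fin n → Fin n → Fin n → Fin n → ℝ)
    (L : (Fin n → ℝ) → Fin n → Fin n → Fin n → ℝ)
    (hLC3 : ∀ a b c, ContDiff ℝ 3 (fun x => L x a b c))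
    (hLasym : ∀ x a b c, L x a b c = - L x b a c)
    (hgauge : ∀ x a, ∑ b, η b * L x a b b = 0)
    (hEq5 : Eq5 η W L) :
    ∀ x a b c d,
      -- W^{[ab}{}_{[cd;i]}{}^{i]}: antisymmetrize over the three upper slots (a,b,^i)
      -- and the three lower slots (c,d,;i), then contract the dummy pair i
      (∑ i, η i *
          asym33 (fun a b f c d e => pd f (pd e (W · a b c d)) x) a b i c d i) =
        -(4 * ((n : ℝ) - 4) / (9 * ((n : ℝ) - 2))) *
            asym22 (fun a b c d =>
              ∑ i, η i *
                (pd b (pd d (pd i (L · a i c))) x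
                  + pd b (pd d (pd i (L · c i a))) x)) a b c d
        - (4 / (9 * ((n : ℝ) - 3))) *
            asym22 (fun a b c d =>
              gm η a c *
                ∑ i, ∑ j, η i * η j * pd j (pd i (W · b i d j)) x) a b c d := by
  intro x a b c d
  have hS := isLanczosJet_lanczosJet hLC3 hLasym hgauge x
  have hW : ∀ p q r s t u, pd u (pd t (W · p q r s)) x = weylJet η (lanczosJet L x) p q r s t u :=
    fun p q r s t u => by
      rw [show (W · p q r s) = (rhs5 η L · p q r s) from funext (hEq5 · p q r s)]
      exact pd_pd_rhs5 hLC3 x p q r s t u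
  have hM : ∀ a b c d, ∑ i, η i * (pd b (pd d (pd i (L · a i c))) x
      + pd b (pd d (pd i (L · c i a))) x) = symmDivHess η (lanczosJet L x) a c b d :=
    fun a b c d => hS.symmDivHess_comm_34 a c d b
  simp only [hW, hM, hS.asym33_weylJet, sum_mul_const_mul, sum_sum_mul_eq_sum_mul_sum,
    hS.sum_sum_weylJet hη]
  rw [sum_asym33_gm_mul hη (symmDivHess_comm_12 η _) hS.symmDivHess_comm_34 hS.sum_symmDivHess_self]
  have hn₃ : (3 : ℝ) < n := by exact_mod_cast hn
  have hn₂ : (n : ℝ) - 2 ≠ 0 := by linarith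
  have hn₃' : (n : ℝ) - 3 ≠ 0 := by linarith
  simp only [asym22]
  field_simp
  ring

/-- **Single contraction of the integrability condition (equation (9), flat space).**
If `W` (`C²`, with the algebraic symmetries and vanishing trace) and `L` (`C³`,
`L_{abc} = L_{[ab]c}`, `L_{ab}{}^b = 0`) satisfy equation (5) on flat `ℝⁿ` (`n ≥ 4`), then
`W^{[ab}{}_{[cd;i]}{}^{i]} = −(4(n−4)/(9(n−2))) ( L^{[a|i|}{}_{[c;|i|d]}{}^{b]}
 + L_{[c}{}^{i[a}{}_{;|i|d]}{}^{b]} ) − (4/(9(n−3))) δ^{[a}_{[c} W^{b]i}{}_{d]j;i}{}^{j}`. -/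
theorem singly_contracted_integrability_condition
    (n : ℕ) (hn : 4 ≤ n) (η : Fin n → ℝ) (hη : ∀ i, η i = 1 ∨ η i = -1)
    (W : (Fin n → ℝ) → Fin n → Fin n → Fin n → Fin n → ℝ)
    (hWC2 : ∀ a b c d, ContDiff ℝ 2 (fun x => W x a b c d))
    (hW1 : ∀ x a b c d, W x a b c d = - W x b a c d)
    (hW2 : ∀ x a b c d, W x a b c d = - W x a b d c)
    (hW3 : ∀ x a b c d, W x a b c d = W x c d a b)
    (hWtr : ∀ x b d, ∑ a, η a * W x a b a d = 0)
    (L : (Fin n → ℝ) → Fin n → Fin n → Fin n → ℝ)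
    (hLC3 : ∀ a b c, ContDiff ℝ 3 (fun x => L x a b c))
    (hLasym : ∀ x a b c, L x a b c = - L x b a c)
    (hgauge : ∀ x a, ∑ b, η b * L x a b b = 0)
    (hEq5 : Eq5 η W L) :
    ∀ x a b c d,
      -- W^{[ab}{}_{[cd;i]}{}^{i]}: antisymmetrize over the three upper slots (a,b,^i)
      -- and the three lower slots (c,d,;i), then contract the dummy pair i
      (∑ i, η i *
          asym33 (fun a b f c d e => pd f (pd e (W · a b c d)) x) a b i c d i) =
        -(4 * ((n : ℝ) - 4) / (9 * ((n : ℝ) - 2))) *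
            asym22 (fun a b c d =>
              ∑ i, η i *
                (pd b (pd d (pd i (L · a i c))) x
                  + pd b (pd d (pd i (L · c i a))) x)) a b c d
        - (4 / (9 * ((n : ℝ) - 3))) *
            asym22 (fun a b c d =>
              gm η a c *
                ∑ i, ∑ j, η i * η j * pd j (pd i (W · b i d j)) x) a b c d :=
  singly_contracted_integrability_condition_general n hn η hη W L hLC3 hLasym hgauge hEq5
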